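/- Let 0 < r < 1 and let a, b ∈ ℝ³ be unit vectors with -1 < ⟨a,b⟩ < 1 and 1 + ⟨a,b⟩ - 2r² > 0. Set x = Φ_r(a,b) and y = Φ_r(b,a). Then Φ_r(x,y) = a and Φ_r(y,x) = b; that is, the dual-edge construction is an involution. -/

import Mathlib

/-! Write `t = ⟪a, b⟫`, `s = √((1 + t - 2r²)/(1 - t))` and `c = a × b`. Then
`x, y = (±s c - r (a + b))/(1 + t)` differ only in the sign of their `c`-component, so
`x + y` is a multiple of `a + b`, while by the vector triple product `x × y` is a multiple
of `(a + b) × c = (1 + t)(a - b)`. Since `c ⟂ a, b` and `‖c‖² = 1 - t²`, one finds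
`1 + ⟪x, y⟫ = 4r²/(1 + t)`, and the square root for the pair `(x, y)` is `r/s`.
The two contributions to `Φ_r(x, y)` then become `(a - b)/2` and `(a + b)/2`.
Swapping `a` and `b` swaps `x` and `y`, which gives the second identity. -/

open scoped RealInnerProductSpace

/-- The cross product on `ℝ³` (as `EuclideanSpace ℝ (Fin 3)`). -/
noncomputable def cross3 (a b : EuclideanSpace ℝ (Fin 3)) : EuclideanSpace ℝ (Fin 3) :=
  (WithLp.equiv 2 (Fin 3 → ℝ)).symm
    ![a 1 * b 2 - a 2 * b 1, a 2 * b 0 - a 0 * b 2, a 0 * b 1 - a 1 * b 0]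

/-- The dual-edge map of the paper:
`Φ_r(a,b) = (1/(1+⟪a,b⟫))·(√((1+⟪a,b⟫-2r²)/(1-⟪a,b⟫))·(a × b) - r·(a+b))`. -/
noncomputable def Phi (r : ℝ) (a b : EuclideanSpace ℝ (Fin 3)) : EuclideanSpace ℝ (Fin 3) :=
  (1 / (1 + ⟪a, b⟫)) •
    (Real.sqrt ((1 + ⟪a, b⟫ - 2 * r ^ 2) / (1 - ⟪a, b⟫)) • cross3 a b - r • (a + b))

open scoped Matrix

lemma cross3_eq_crossProduct (a b : EuclideanSpace ℝ (Fin 3)) :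
    cross3 a b = WithLp.toLp 2 (a.ofLp ⨯₃ b.ofLp) := rfl

lemma EuclideanSpace.real_inner_eq_dotProduct {ι : Type*} [Fintype ι]
    (a b : EuclideanSpace ℝ ι) : ⟪a, b⟫ = a.ofLp ⬝ᵥ b.ofLp := by
  rw [EuclideanSpace.inner_eq_star_dotProduct, star_trivial, dotProduct_comm]

lemma cross3_anticomm (a b : EuclideanSpace ℝ (Fin 3)) : cross3 b a = -cross3 a b := by
  rw [cross3_eq_crossProduct, cross3_eq_crossProduct, ← cross_anticomm]
  rfl

lemma inner_cross3_self_left (a b : EuclideanSpace ℝ (Fin 3)) : ⟪cross3 a b, a⟫ = 0 := by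
  rw [EuclideanSpace.real_inner_eq_dotProduct, dotProduct_comm, cross3_eq_crossProduct]
  exact dot_self_cross _ _

lemma inner_cross3_self_right (a b : EuclideanSpace ℝ (Fin 3)) : ⟪cross3 a b, b⟫ = 0 := by
  rw [EuclideanSpace.real_inner_eq_dotProduct, dotProduct_comm, cross3_eq_crossProduct]
  exact dot_cross_self _ _

lemma inner_cross3_cross3 (a b c d : EuclideanSpace ℝ (Fin 3)) :
    ⟪cross3 a b, cross3 c d⟫ = ⟪a, c⟫ * ⟪b, d⟫ - ⟪a, d⟫ * ⟪b, c⟫ := by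
  simp only [EuclideanSpace.real_inner_eq_dotProduct, cross3_eq_crossProduct]
  exact cross_dot_cross _ _ _ _

lemma cross3_cross3 (a b c : EuclideanSpace ℝ (Fin 3)) :
    cross3 (cross3 a b) c = ⟪a, c⟫ • b - ⟪b, c⟫ • a := by
  simp only [EuclideanSpace.real_inner_eq_dotProduct, cross3_eq_crossProduct]
  rw [cross_cross_eq_smul_sub_smul]; rfl

lemma cross3_smul_add_smul (p q p' q' : ℝ) (u v : EuclideanSpace ℝ (Fin 3)) :
    cross3 (p • u + q • v) (p' • u + q' • v) = (p * q' - q * p') • cross3 u v := by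
  rw [cross3_eq_crossProduct, cross3_eq_crossProduct]
  simp only [WithLp.ofLp_add, WithLp.ofLp_smul, map_add, map_smul, LinearMap.add_apply,
    LinearMap.smul_apply, cross_self, smul_zero, add_zero, zero_add]
  rw [← cross_anticomm (WithLp.ofLp u)]
  simp only [WithLp.toLp_add, WithLp.toLp_smul, WithLp.toLp_neg]
  module

noncomputable def phiScale (r t : ℝ) : ℝ := Real.sqrt ((1 + t - 2 * r ^ 2) / (1 - t))

lemma Phi_eq_smul_add_smul (r : ℝ) (a b : EuclideanSpace ℝ (Fin 3)) :
    Phi r a b = (phiScale r ⟪a, b⟫ / (1 + ⟪a, b⟫)) • cross3 a b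
      + (-r / (1 + ⟪a, b⟫)) • (a + b) := by
  unfold Phi phiScale
  module

lemma Phi_swap_eq_smul_add_smul (r : ℝ) (a b : EuclideanSpace ℝ (Fin 3)) :
    Phi r b a = (-(phiScale r ⟪a, b⟫ / (1 + ⟪a, b⟫))) • cross3 a b
      + (-r / (1 + ⟪a, b⟫)) • (a + b) := by
  rw [Phi_eq_smul_add_smul, real_inner_comm, cross3_anticomm, add_comm b a]
  module

lemma Phi_add_Phi_swap (r : ℝ) (a b : EuclideanSpace ℝ (Fin 3)) :
    Phi r a b + Phi r b a = (-2 * r / (1 + ⟪a, b⟫)) • (a + b) := by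
  rw [Phi_eq_smul_add_smul, Phi_swap_eq_smul_add_smul]
  module

section

variable {r t : ℝ}

lemma phiScale_sq_mul (ht : t < 1) (hrt : 0 ≤ 1 + t - 2 * r ^ 2) :
    phiScale r t ^ 2 * (1 - t) = 1 + t - 2 * r ^ 2 := by
  rw [phiScale, Real.sq_sqrt (div_nonneg hrt (by linarith)), div_mul_cancel₀ _ (by linarith)]

lemma phiScale_pos (ht : t < 1) (hrt : 0 < 1 + t - 2 * r ^ 2) : 0 < phiScale r t :=
  Real.sqrt_pos.mpr (div_pos hrt (by linarith))

lemma phiScale_dual (hr : 0 < r) (ht : t < 1) (hrt : 0 < 1 + t - 2 * r ^ 2) :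
    phiScale r ((4 * r ^ 2 - 1 - t) / (1 + t)) = r / phiScale r t := by
  have h1t : 0 < 1 + t := by nlinarith
  have hnum :
      1 + (4 * r ^ 2 - 1 - t) / (1 + t) - 2 * r ^ 2 = 2 * r ^ 2 * (1 - t) / (1 + t) := by
    field_simp; ring
  have hden : 1 - (4 * r ^ 2 - 1 - t) / (1 + t) = 2 * (1 + t - 2 * r ^ 2) / (1 + t) := by
    field_simp; ring
  rw [phiScale, ← Real.sqrt_sq (div_pos hr (phiScale_pos ht hrt)).le, hnum, hden, div_pow,
    phiScale, Real.sq_sqrt (div_pos hrt (by linarith)).le]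
  field_simp

end

section

variable {r : ℝ} {a b : EuclideanSpace ℝ (Fin 3)}

lemma inner_Phi_Phi_swap (ha : ‖a‖ = 1) (hb : ‖b‖ = 1) (ht : ⟪a, b⟫ < 1)
    (hrt : 0 < 1 + ⟪a, b⟫ - 2 * r ^ 2) :
    ⟪Phi r a b, Phi r b a⟫ = (4 * r ^ 2 - 1 - ⟪a, b⟫) / (1 + ⟪a, b⟫) := by
  have haa : ⟪a, a⟫ = 1 := by simp [ha]
  have hbb : ⟪b, b⟫ = 1 := by simp [hb]
  have hs2 := phiScale_sq_mul ht hrt.le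
  have h1t : 0 < 1 + ⟪a, b⟫ := by nlinarith
  have hca := inner_cross3_self_left a b
  have hcb := inner_cross3_self_right a b
  have hac : ⟪a, cross3 a b⟫ = 0 := by rw [real_inner_comm, hca]
  have hbc : ⟪b, cross3 a b⟫ = 0 := by rw [real_inner_comm, hcb]
  have hba : ⟪b, a⟫ = ⟪a, b⟫ := real_inner_comm a b
  rw [Phi_eq_smul_add_smul, Phi_swap_eq_smul_add_smul]
  simp only [inner_add_left, inner_add_right, real_inner_smul_left, real_inner_smul_right,
    hca, hcb, hac, hbc, inner_cross3_cross3, haa, hbb, hba]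
  field_simp
  linear_combination (-(1 + ⟪a, b⟫)) * hs2

lemma cross3_Phi_Phi_swap (ha : ‖a‖ = 1) (hb : ‖b‖ = 1) (h1t : 1 + ⟪a, b⟫ ≠ 0) :
    cross3 (Phi r a b) (Phi r b a)
      = (2 * phiScale r ⟪a, b⟫ * r / (1 + ⟪a, b⟫)) • (a - b) := by
  have haa : ⟪a, a⟫ = 1 := by simp [ha]
  have hbb : ⟪b, b⟫ = 1 := by simp [hb]
  rw [Phi_eq_smul_add_smul, Phi_swap_eq_smul_add_smul, cross3_smul_add_smul, cross3_cross3]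
  simp only [inner_add_right, haa, hbb, real_inner_comm a b]
  match_scalars <;> field_simp <;> ring

lemma Phi_Phi_Phi_swap (hr : 0 < r) (ha : ‖a‖ = 1) (hb : ‖b‖ = 1) (ht : ⟪a, b⟫ < 1)
    (hrt : 0 < 1 + ⟪a, b⟫ - 2 * r ^ 2) :
    Phi r (Phi r a b) (Phi r b a) = a := by
  have h1t : 0 < 1 + ⟪a, b⟫ := by nlinarith
  have hs := phiScale_pos ht hrt
  rw [Phi_eq_smul_add_smul r (Phi r a b), inner_Phi_Phi_swap ha hb ht hrt,
    phiScale_dual hr ht hrt, cross3_Phi_Phi_swap ha hb h1t.ne', Phi_add_Phi_swap]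
  match_scalars <;> field_simp <;> ring

end

theorem stmt_15_general (r : ℝ) (hr0 : 0 < r)
    (a b : EuclideanSpace ℝ (Fin 3)) (ha : ‖a‖ = 1) (hb : ‖b‖ = 1)
    (h₂ : ⟪a, b⟫ < 1) (h₃ : 0 < 1 + ⟪a, b⟫ - 2 * r ^ 2)
    (x y : EuclideanSpace ℝ (Fin 3)) (hx : x = Phi r a b) (hy : y = Phi r b a) :
    Phi r x y = a ∧ Phi r y x = b := by
  subst hx hy
  have hba : ⟪b, a⟫ = ⟪a, b⟫ := real_inner_comm a b
  exact ⟨Phi_Phi_Phi_swap hr0 ha hb h₂ h₃, Phi_Phi_Phi_swap hr0 hb ha (hba ▸ h₂) (hba ▸ h₃)⟩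

/-- The dual-edge construction is an involution: with `x = Φ_r(a,b)` and `y = Φ_r(b,a)`
one has `Φ_r(x,y) = a` and `Φ_r(y,x) = b`. -/
theorem stmt_15 (r : ℝ) (hr0 : 0 < r) (hr1 : r < 1)
    (a b : EuclideanSpace ℝ (Fin 3)) (ha : ‖a‖ = 1) (hb : ‖b‖ = 1)
    (h₁ : -1 < ⟪a, b⟫) (h₂ : ⟪a, b⟫ < 1) (h₃ : 0 < 1 + ⟪a, b⟫ - 2 * r ^ 2)
    (x y : EuclideanSpace ℝ (Fin 3)) (hx : x = Phi r a b) (hy : y = Phi r b a) :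
    Phi r x y = a ∧ Phi r y x = b :=
  stmt_15_general r hr0 a b ha hb h₂ h₃ x y hx hy
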